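/- arXiv:1606.03386 — 3 statements merged into one kernel-verified Lean document; each statement's English description precedes it below -/
import Mathlib

section
/- For all s ∈ (0,1/2) and integer k ≥ 3, θ̃(1/2) − θ̃(s) > θ̃(1−s) − θ̃(1/2); that is, the adoption curve on a random k-regular graph is asymmetric: growing from fraction s to 1/2 takes strictly longer than growing from 1/2 to 1−s. -/
open Real Set

/-!
With `a = (k - 2) / k ∈ (0, 1)` and `L t = log (t ^ (-a) - 1)`, one has
`θ̃ s = C (L (1 - s) - L (1 / 2))` with `C > 0`, so the claim is `L s + L (1 - s) < 2 L (1 / 2)`.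
Since `L' t = -a / (t (1 - t ^ a))`, the symmetric sum `L t + L (1 - t)` is strictly increasing on
`(0, 1/2]` as soon as `u (1 - u ^ a) < t (1 - t ^ a)` for `t < u = 1 - t`, and this last
inequality follows from two instances of Bernoulli's inequality with exponents in `(0, 1)`.
-/

lemma rpow_lt_one_add_mul_sub_one {x p : ℝ} (hx : 0 < x) (hx1 : x ≠ 1) (hp0 : 0 < p)
    (hp1 : p < 1) :
    x ^ p < 1 + p * (x - 1) := by
  simpa using
    rpow_one_add_lt_one_add_mul_self (s := x - 1) (by linarith) (sub_ne_zero.2 hx1) hp0 hp1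

lemma mul_one_sub_rpow_lt_of_add_eq_one {a t u : ℝ} (ha0 : 0 < a) (ha1 : a < 1) (ht : 0 < t)
    (htu : t < u) (hsum : t + u = 1) : u * (1 - u ^ a) < t * (1 - t ^ a) := by
  have hu : 0 < u := ht.trans htu
  have hp : 0 < u ^ a := rpow_pos_of_pos hu a
  have hquot : u * t ^ a < u ^ a * (u - a * (u - t)) := by
    have := rpow_lt_one_add_mul_sub_one (div_pos ht hu) ((div_lt_one hu).2 htu).ne ha0 ha1
    rw [div_rpow ht.le hu.le, div_lt_iff₀ hp] at this
    calc u * t ^ a < u * ((1 + a * (t / u - 1)) * u ^ a) := mul_lt_mul_of_pos_left this hu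
      _ = u ^ a * (u - a * (u - t)) := by field_simp; ring
  have hcompl : u < u ^ a * (u + a * t) := by
    have := rpow_lt_one_add_mul_sub_one hu (by linarith) (sub_pos.2 ha1) (sub_lt_self 1 ha0)
    rwa [rpow_one_sub' hu.le (by linarith), div_lt_iff₀ hp,
      show 1 + (1 - a) * (u - 1) = u + a * t by linear_combination (-a) * hsum, mul_comm] at this
  have hut : 0 < u - t := sub_pos.2 htu
  nlinarith [mul_lt_mul_of_pos_left hcompl hut, mul_lt_mul_of_pos_left hquot ht]

lemma hasDerivAt_log_rpow_neg_sub_one {a t : ℝ} (ha : 0 < a) (ht0 : 0 < t) (ht1 : t < 1) :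
    HasDerivAt (fun x => log (x ^ (-a) - 1)) (-a / (t * (1 - t ^ a))) t := by
  have hlt : 1 < t ^ (-a) := one_lt_rpow_of_pos_of_lt_one_of_neg ht0 ht1 (neg_neg_of_pos ha)
  have hpow : t ^ a < 1 := rpow_lt_one ht0.le ht1 ha
  convert ((hasDerivAt_rpow_const (p := -a) (Or.inl ht0.ne')).sub_const 1).log
    (by linarith) using 1
  rw [rpow_sub_one ht0.ne', rpow_neg ht0.le]
  have : 0 < t ^ a := rpow_pos_of_pos ht0 a
  field_simp

lemma strictMonoOn_log_rpow_neg_sub_one_add {a : ℝ} (ha0 : 0 < a) (ha1 : a < 1) :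
    StrictMonoOn (fun t => log (t ^ (-a) - 1) + log ((1 - t) ^ (-a) - 1)) (Ioc 0 (1 / 2)) := by
  have hderiv : ∀ t ∈ Ioo (0 : ℝ) 1, HasDerivAt
      (fun t => log (t ^ (-a) - 1) + log ((1 - t) ^ (-a) - 1))
      (-a / (t * (1 - t ^ a)) + a / ((1 - t) * (1 - (1 - t) ^ a))) t := by
    rintro t ⟨ht0, ht1⟩
    have hright := (hasDerivAt_log_rpow_neg_sub_one ha0 (sub_pos.2 ht1) (sub_lt_self 1 ht0)).comp t
      ((hasDerivAt_id t).const_sub 1)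
    exact ((hasDerivAt_log_rpow_neg_sub_one ha0 ht0 ht1).add hright).congr_deriv (by ring)
  refine strictMonoOn_of_deriv_pos (convex_Ioc 0 (1 / 2))
    (fun t ht => (hderiv t ⟨ht.1, by linarith [ht.2]⟩).continuousAt.continuousWithinAt) ?_
  intro t ht
  rw [interior_Ioc] at ht
  obtain ⟨ht0, ht2⟩ := ht
  have ht1 : t < 1 := by linarith
  rw [(hderiv t ⟨ht0, ht1⟩).deriv]
  have hlt := mul_one_sub_rpow_lt_of_add_eq_one ha0 ha1 ht0 (by linarith : t < 1 - t) (by ring)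
  have hpos : 0 < (1 - t) * (1 - (1 - t) ^ a) :=
    mul_pos (by linarith) (sub_pos.2 (rpow_lt_one (by linarith) (by linarith) ha0))
  rw [neg_div, neg_add_eq_sub, sub_pos]
  exact div_lt_div_of_pos_left ha0 hpos hlt

/-- Asymmetry of the adoption curve on a random k-regular graph: for s ∈ (0,1/2),
    θ̃(1/2) − θ̃(s) > θ̃(1−s) − θ̃(1/2). -/
theorem stmt_8 (k : ℕ) (hk : 3 ≤ k) (β : ℝ) (hβ : 0 < β)
    (θt : ℝ → ℝ)
    (hθt : ∀ s, θt s = ((k : ℝ) / (β * ((k : ℝ) - 2))) *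
      Real.log (((1 - s) ^ (((2 : ℝ) - k) / k) - 1) / ((2 : ℝ) ^ (((k : ℝ) - 2) / k) - 1))) :
    ∀ s ∈ Set.Ioo (0 : ℝ) (1 / 2),
      θt (1 - s) - θt (1 / 2) < θt (1 / 2) - θt s := by
  rintro s ⟨hs0, hs2⟩
  have hk3 : (3 : ℝ) ≤ k := by exact_mod_cast hk
  set a : ℝ := ((k : ℝ) - 2) / k
  have ha0 : 0 < a := div_pos (by linarith) (by linarith)
  have ha1 : a < 1 := (div_lt_one (by linarith)).2 (by linarith)
  set C : ℝ := (k : ℝ) / (β * ((k : ℝ) - 2))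
  have hC : 0 < C := div_pos (by linarith) (mul_pos hβ (by linarith))
  have hbase_ne : ∀ x ∈ Ioo (0 : ℝ) 1, x ^ (-a) - 1 ≠ 0 := fun x hx =>
    (sub_pos.2 (one_lt_rpow_of_pos_of_lt_one_of_neg hx.1 hx.2 (neg_neg_of_pos ha0))).ne'
  have hθ : ∀ x ∈ Ioo (0 : ℝ) 1,
      θt x = C * (log ((1 - x) ^ (-a) - 1) - log ((1 - 1 / 2) ^ (-a) - 1)) := by
    intro x hx
    have hhalf : (2 : ℝ) ^ a = (1 - 1 / 2) ^ (-a) := by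
      rw [rpow_neg (by norm_num), ← inv_rpow (by norm_num)]; norm_num
    rw [hθt, show ((2 : ℝ) - k) / k = -a by ring, hhalf,
      log_div (hbase_ne _ ⟨by linarith [hx.2], by linarith [hx.1]⟩) (hbase_ne _ (by norm_num))]
  have hmono := strictMonoOn_log_rpow_neg_sub_one_add ha0 ha1
    ⟨hs0, hs2.le⟩ ⟨one_half_pos, le_rfl⟩ hs2
  rw [hθ s ⟨hs0, by linarith⟩, hθ (1 - s) ⟨by linarith, by linarith⟩,
    hθ (1 / 2) (by norm_num), sub_sub_cancel]
  nlinarith [mul_lt_mul_of_pos_left hmono hC]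
end

section
/- With f(x) = (1−2x/k)^{k/2} and g(x) = k(1−f(x)) − 2x, for any 0 < α ≤ γ < 1 we have (k/β)·∫_{f^{-1}(1−α)}^{f^{-1}(1−γ)} 1/g(x) dx = θ̃(γ) − θ̃(α), where θ̃(s) = (k/(β(k−2)))·log(((1−s)^{(2−k)/k} − 1)/(2^{(k−2)/k} − 1)). -/
open Real Set intervalIntegral

/-! In the variable `u = 1 - 2x/k` one has `f = u^{k/2}` and `g = k (u - u^{k/2})`, and
`log (u^{1-k/2} - 1) / (k - 2)` is a primitive of `1/g` on `(0, k/2)`. Since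
`(1 - s)^{(2-k)/k} = u^{1-k/2}` when `f(x) = 1 - s`, `θ̃(s)` is `k/β` times this primitive at
`x = f⁻¹(1 - s)` up to an additive constant, and the identity is the fundamental theorem of
calculus. -/

theorem hasDerivAt_log_rpow_sub_one {q u : ℝ} (hu : 0 < u) (hq : u ^ q ≠ 1) :
    HasDerivAt (fun v => log (v ^ q - 1)) (q / (u - u ^ (1 - q))) u := by
  refine ((((hasDerivAt_id' u).rpow_const (p := q) (Or.inl hu.ne')).sub_const 1).log
    (sub_ne_zero.2 hq)).congr_deriv ?_
  have hq' : u ^ q - 1 ≠ 0 := sub_ne_zero.2 hq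
  rw [rpow_sub hu 1 q, rpow_sub hu q 1, rpow_one]
  field_simp

theorem hasDerivAt_log_rpow_sub_one_div {K x : ℝ} (hK0 : K ≠ 0) (hK2 : K ≠ 2)
    (hu : 0 < 1 - 2 * x / K) (hq : (1 - 2 * x / K) ^ (1 - K / 2) ≠ 1) :
    HasDerivAt (fun y => log ((1 - 2 * y / K) ^ (1 - K / 2) - 1) / (K - 2))
      (1 / (K * (1 - (1 - 2 * x / K) ^ (K / 2)) - 2 * x)) x := by
  have hlin := (((hasDerivAt_id' x).const_mul 2).div_const K).const_sub 1
  refine (((hasDerivAt_log_rpow_sub_one hu hq).comp x hlin).div_const (K - 2)).congr_deriv ?_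
  rw [show 1 - (1 - K / 2) = K / 2 by ring]
  set u := 1 - 2 * x / K with hu_def
  have hg : K * (1 - u ^ (K / 2)) - 2 * x = K * (u - u ^ (K / 2)) := by
    rw [hu_def]; field_simp; ring
  have hc : (1 - K / 2) * -(2 * 1 / K) / (K - 2) = 1 / K := by
    field_simp [sub_ne_zero.2 hK2]; ring
  rw [hg]
  calc _ = (1 - K / 2) * -(2 * 1 / K) / (K - 2) / (u - u ^ (K / 2)) := by ring
    _ = _ := by rw [hc, div_div]

theorem one_sub_two_mul_div_mem_Ioo {K x : ℝ} (hx : x ∈ Ioo 0 (K / 2)) :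
    1 - 2 * x / K ∈ Ioo 0 1 := by
  have hK : 0 < K := by linarith [hx.1, hx.2]
  constructor
  · rw [sub_pos, div_lt_one hK]; linarith [hx.2]
  · have : 0 < 2 * x / K := div_pos (by linarith [hx.1]) hK
    linarith

theorem mul_one_sub_rpow_sub_two_mul_pos {K x : ℝ} (hK : 2 < K) (hx : x ∈ Ioo 0 (K / 2)) :
    0 < K * (1 - (1 - 2 * x / K) ^ (K / 2)) - 2 * x := by
  obtain ⟨hu0, hu1⟩ := one_sub_two_mul_div_mem_Ioo hx
  have hlt := rpow_lt_self_of_lt_one hu0 hu1 (by linarith : (1 : ℝ) < K / 2)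
  have hK0 : K ≠ 0 := by positivity
  have : K * (1 - (1 - 2 * x / K) ^ (K / 2)) - 2 * x
      = K * (1 - 2 * x / K - (1 - 2 * x / K) ^ (K / 2)) := by field_simp; ring
  rw [this]
  exact mul_pos (by linarith) (by linarith)

theorem integral_one_div_mul_one_sub_rpow_sub_two_mul {K a b : ℝ} (hK : 2 < K)
    (ha : a ∈ Ioo 0 (K / 2)) (hb : b ∈ Ioo 0 (K / 2)) :
    ∫ x in a..b, 1 / (K * (1 - (1 - 2 * x / K) ^ (K / 2)) - 2 * x) =
      log ((1 - 2 * b / K) ^ (1 - K / 2) - 1) / (K - 2) -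
        log ((1 - 2 * a / K) ^ (1 - K / 2) - 1) / (K - 2) := by
  have hIoo : uIcc a b ⊆ Ioo 0 (K / 2) := ordConnected_Ioo.uIcc_subset ha hb
  apply integral_eq_sub_of_hasDerivAt
  · intro x hx
    obtain ⟨hu0, hu1⟩ := one_sub_two_mul_div_mem_Ioo (hIoo hx)
    exact hasDerivAt_log_rpow_sub_one_div (by positivity) (by linarith) hu0
      (one_lt_rpow_of_pos_of_lt_one_of_neg hu0 hu1 (by linarith)).ne'
  · have hcont : Continuous fun x : ℝ => K * (1 - (1 - 2 * x / K) ^ (K / 2)) - 2 * x := by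
      have := continuous_rpow_const (by positivity : (0 : ℝ) ≤ K / 2)
      fun_prop
    exact (continuousOn_const.div hcont.continuousOn fun x hx =>
      (mul_one_sub_rpow_sub_two_mul_pos hK (hIoo hx)).ne').intervalIntegrable

theorem log_rpow_rpow_sub_one_div {K x c : ℝ} (hK : 2 < K) (hx : x ∈ Ioo 0 (K / 2))
    (hc : c ≠ 0) :
    log ((((1 - 2 * x / K) ^ (K / 2)) ^ ((2 - K) / K) - 1) / c) =
      log ((1 - 2 * x / K) ^ (1 - K / 2) - 1) - log c := by
  obtain ⟨hu0, hu1⟩ := one_sub_two_mul_div_mem_Ioo hx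
  have hexp : K / 2 * ((2 - K) / K) = 1 - K / 2 := by field_simp
  rw [← rpow_mul hu0.le, hexp,
    log_div (sub_pos.2 (one_lt_rpow_of_pos_of_lt_one_of_neg hu0 hu1 (by linarith))).ne' hc]

theorem stmt_11_general (k : ℕ) (hk : 3 ≤ k) (β : ℝ)
    (f g θt : ℝ → ℝ)
    (hf : ∀ x, f x = (1 - 2 * x / (k : ℝ)) ^ ((k : ℝ) / 2))
    (hg : ∀ x, g x = (k : ℝ) * (1 - f x) - 2 * x)
    (hθt : ∀ s, θt s = ((k : ℝ) / (β * ((k : ℝ) - 2))) *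
      Real.log (((1 - s) ^ (((2 : ℝ) - k) / k) - 1) / ((2 : ℝ) ^ (((k : ℝ) - 2) / k) - 1)))
    (α γ : ℝ) (hα : 0 < α) (hαγ : α ≤ γ)
    (xα xγ : ℝ)
    (hxα : xα ∈ Set.Ico (0 : ℝ) ((k : ℝ) / 2)) (hxγ : xγ ∈ Set.Ico (0 : ℝ) ((k : ℝ) / 2))
    (hfα : f xα = 1 - α) (hfγ : f xγ = 1 - γ) :
    ((k : ℝ) / β) * ∫ x in xα..xγ, 1 / g x = θt γ - θt α := by
  have hK : (2 : ℝ) < k := by exact_mod_cast hk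
  have hpos : ∀ {x s : ℝ}, x ∈ Ico 0 ((k : ℝ) / 2) → f x = 1 - s → 0 < s →
      x ∈ Ioo 0 ((k : ℝ) / 2) := by
    rintro x s ⟨hx0, hxK⟩ hfx hs
    refine ⟨hx0.lt_of_ne ?_, hxK⟩
    rintro rfl
    rw [hf, mul_zero, zero_div, sub_zero, one_rpow] at hfx
    linarith
  have hC : (2 : ℝ) ^ (((k : ℝ) - 2) / k) - 1 ≠ 0 :=
    (sub_pos.2 (one_lt_rpow one_lt_two (div_pos (by linarith) (by linarith)))).ne'
  have hθ : ∀ {x s : ℝ}, x ∈ Ioo 0 ((k : ℝ) / 2) → f x = 1 - s → θt s =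
      (k / (β * (k - 2))) * (log ((1 - 2 * x / k) ^ (1 - (k : ℝ) / 2) - 1) -
        log ((2 : ℝ) ^ (((k : ℝ) - 2) / k) - 1)) := by
    intro x s hx hfx
    rw [hθt, ← hfx, hf, log_rpow_rpow_sub_one_div hK hx hC]
  have hxα' := hpos hxα hfα hα
  have hxγ' := hpos hxγ hfγ (hα.trans_le hαγ)
  simp_rw [hg, hf]
  rw [integral_one_div_mul_one_sub_rpow_sub_two_mul hK hxα' hxγ', hθ hxγ' hfγ, hθ hxα' hfα,
    ← div_div]
  ring

/-- With f(x) = (1−2x/k)^{k/2}, g(x) = k(1−f(x)) − 2x, and points xα, xγ with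
    f(xα) = 1−α, f(xγ) = 1−γ (i.e. xα = f⁻¹(1−α), xγ = f⁻¹(1−γ)), for any
    0 < α ≤ γ < 1:  (k/β)·∫_{xα}^{xγ} 1/g(x) dx = θ̃(γ) − θ̃(α). -/
theorem stmt_11 (k : ℕ) (hk : 3 ≤ k) (β : ℝ) (hβ : 0 < β)
    (f g θt : ℝ → ℝ)
    (hf : ∀ x, f x = (1 - 2 * x / (k : ℝ)) ^ ((k : ℝ) / 2))
    (hg : ∀ x, g x = (k : ℝ) * (1 - f x) - 2 * x)
    (hθt : ∀ s, θt s = ((k : ℝ) / (β * ((k : ℝ) - 2))) *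
      Real.log (((1 - s) ^ (((2 : ℝ) - k) / k) - 1) / ((2 : ℝ) ^ (((k : ℝ) - 2) / k) - 1)))
    (α γ : ℝ) (hα : 0 < α) (hαγ : α ≤ γ) (hγ : γ < 1)
    (xα xγ : ℝ)
    (hxα : xα ∈ Set.Ico (0 : ℝ) ((k : ℝ) / 2)) (hxγ : xγ ∈ Set.Ico (0 : ℝ) ((k : ℝ) / 2))
    (hfα : f xα = 1 - α) (hfγ : f xγ = 1 - γ) :
    ((k : ℝ) / β) * ∫ x in xα..xγ, 1 / g x = θt γ - θt α :=
  stmt_11_general k hk β f g θt hf hg hθt α γ hα hαγ xα xγ hxα hxγ hfα hfγ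
end

section
/- Let λ_i = β·i·(n−i)/(n−1) for α·n ≤ i ≤ γ·n − 1 (with 0 < α ≤ γ < 1). Then ∑_{i=⌈αn⌉}^{⌈γn⌉−1} 1/λ_i converges, as n → ∞, to (1/β)·[log(γ/(1−γ)) − log(α/(1−α))]. -/
/-!
Partial fractions split `(n - 1) / (β i (n - i))` into `(n - 1) / (β n) · (1 / i + 1 / (n - i))`,
so the sum is `(n - 1) / (β n)` times two blocks of the harmonic series, one over
`[⌈αn⌉, ⌈γn⌉)` and, after reflecting `i ↦ n - i`, one over `(n - ⌈γn⌉, n - ⌈αn⌉]`.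
Since `H_m - log m` converges, a block `∑_{x ≤ i < y} 1 / i` with `x ~ s n` and `y ~ t n`
tends to `log t - log s`.
-/

open Real Filter Finset Topology

lemma sum_Ico_inv_eq_harmonic_sub {x y : ℕ} (hxy : x ≤ y) :
    ∑ i ∈ Ico x y, (i : ℝ)⁻¹ = harmonic y - harmonic x + (x : ℝ)⁻¹ - (y : ℝ)⁻¹ := by
  induction y, hxy using Nat.le_induction with
  | base => simp
  | succ y hxy ih =>
    rw [sum_Ico_succ_top hxy, ih, harmonic_succ]
    push_cast
    ring

lemma sum_Ico_inv_mul_sub {a b n : ℕ} (ha : 0 < a) (hb : b ≤ n) :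
    ∑ i ∈ Ico a b, ((i : ℝ) * (n - i))⁻¹
      = (∑ i ∈ Ico a b, (i : ℝ)⁻¹ + ∑ j ∈ Ico (n + 1 - b) (n + 1 - a), (j : ℝ)⁻¹) / n := by
  rw [← sum_Ico_reflect (fun j : ℕ ↦ (j : ℝ)⁻¹) a (by omega : b ≤ n + 1), ← sum_add_distrib,
    sum_div]
  refine sum_congr rfl fun i hi ↦ ?_
  rw [mem_Ico] at hi
  have hi0 : (0 : ℝ) < i := by exact_mod_cast ha.trans_le hi.1
  have hin : (i : ℝ) < n := by exact_mod_cast hi.2.trans_le hb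
  rw [Nat.cast_sub (by omega : i ≤ n)]
  field_simp [(hi0.trans hin).ne', (sub_pos.2 hin).ne']
  ring

section RatioLimits

variable {x : ℕ → ℕ} {s : ℝ}

lemma tendsto_atTop_of_tendsto_div (hs : 0 < s)
    (hx : Tendsto (fun n ↦ (x n : ℝ) / n) atTop (𝓝 s)) : Tendsto x atTop atTop := by
  rw [← tendsto_natCast_atTop_iff (R := ℝ)]
  refine (hx.pos_mul_atTop hs tendsto_natCast_atTop_atTop).congr' ?_
  filter_upwards [eventually_ne_atTop 0] with n hn
  field_simp

lemma eventually_le_self_of_tendsto_div (hs : s < 1)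
    (hx : Tendsto (fun n ↦ (x n : ℝ) / n) atTop (𝓝 s)) : ∀ᶠ n in atTop, x n ≤ n := by
  filter_upwards [hx.eventually (gt_mem_nhds hs), eventually_gt_atTop 0] with n hlt hn
  have : (x n : ℝ) < n := (div_lt_one (by positivity)).1 hlt
  exact_mod_cast this.le

lemma tendsto_succ_sub_div (hs : s < 1)
    (hx : Tendsto (fun n ↦ (x n : ℝ) / n) atTop (𝓝 s)) :
    Tendsto (fun n ↦ ((n + 1 - x n : ℕ) : ℝ) / n) atTop (𝓝 (1 - s)) := by
  have h : Tendsto (fun n : ℕ ↦ 1 + (n : ℝ)⁻¹ - (x n : ℝ) / n) atTop (𝓝 (1 + 0 - s)) :=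
    (tendsto_const_nhds.add tendsto_inv_atTop_nhds_zero_nat).sub hx
  rw [add_zero] at h
  refine h.congr' ?_
  filter_upwards [eventually_le_self_of_tendsto_div hs hx, eventually_ne_atTop 0] with n hle hn
  rw [Nat.cast_sub (by omega)]
  field_simp
  push_cast
  ring

end RatioLimits

theorem tendsto_sum_Ico_inv {x y : ℕ → ℕ} {s t : ℝ} (hs : 0 < s) (ht : 0 < t)
    (hx : Tendsto (fun n ↦ (x n : ℝ) / n) atTop (𝓝 s))
    (hy : Tendsto (fun n ↦ (y n : ℝ) / n) atTop (𝓝 t)) (hxy : ∀ᶠ n in atTop, x n ≤ y n) :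
    Tendsto (fun n ↦ ∑ i ∈ Ico (x n) (y n), (i : ℝ)⁻¹) atTop (𝓝 (log t - log s)) := by
  have hx' := tendsto_atTop_of_tendsto_div hs hx
  have hy' := tendsto_atTop_of_tendsto_div ht hy
  have hH {z : ℕ → ℕ} (hz : Tendsto z atTop atTop) :
      Tendsto (fun n ↦ (harmonic (z n) : ℝ) - log (z n)) atTop (𝓝 eulerMascheroniConstant) :=
    tendsto_harmonic_sub_log.comp hz
  have hinv {z : ℕ → ℕ} (hz : Tendsto z atTop atTop) :
      Tendsto (fun n ↦ (z n : ℝ)⁻¹) atTop (𝓝 0) :=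
    tendsto_inv_atTop_nhds_zero_nat.comp hz
  have hlog : Tendsto (fun n ↦ log ((y n : ℝ) / n) - log ((x n : ℝ) / n)) atTop
      (𝓝 (log t - log s)) :=
    ((continuousAt_log ht.ne').tendsto.comp hy).sub ((continuousAt_log hs.ne').tendsto.comp hx)
  have h := ((((hH hy').sub (hH hx')).add hlog).add (hinv hx')).sub (hinv hy')
  rw [sub_self, zero_add, add_zero, sub_zero] at h
  refine h.congr' ?_
  filter_upwards [hxy, hx'.eventually_gt_atTop 0, hy'.eventually_gt_atTop 0,
    eventually_gt_atTop 0] with n hxy hx0 hy0 hn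
  rw [sum_Ico_inv_eq_harmonic_sub hxy, log_div (by positivity) (by positivity),
    log_div (by positivity) (by positivity)]
  ring

theorem stmt_13_general (β α γ : ℝ) (hα : 0 < α) (hαγ : α ≤ γ) (hγ : γ < 1) :
    Filter.Tendsto
      (fun n : ℕ => ∑ i ∈ Finset.Ico ⌈α * n⌉₊ ⌈γ * n⌉₊,
        ((n : ℝ) - 1) / (β * i * ((n : ℝ) - i)))
      Filter.atTop
      (nhds ((1 / β) * (Real.log (γ / (1 - γ)) - Real.log (α / (1 - α))))) := by
  have hγ0 : 0 < γ := hα.trans_le hαγ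
  have hα1 : α < 1 := hαγ.trans_lt hγ
  have ha := (tendsto_nat_ceil_mul_div_atTop hα.le).comp tendsto_natCast_atTop_atTop
  have hb := (tendsto_nat_ceil_mul_div_atTop hγ0.le).comp tendsto_natCast_atTop_atTop
  have hab (n : ℕ) : ⌈α * n⌉₊ ≤ ⌈γ * n⌉₊ := Nat.ceil_mono (by gcongr)
  have hblocks := (tendsto_sum_Ico_inv hα hγ0 ha hb (.of_forall hab)).add
    (tendsto_sum_Ico_inv (sub_pos.2 hγ) (sub_pos.2 hα1) (tendsto_succ_sub_div hγ hb)
      (tendsto_succ_sub_div hα1 ha) (.of_forall fun n ↦ Nat.sub_le_sub_left (hab n) _))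
  have hpre : Tendsto (fun n : ℕ ↦ (1 - (n : ℝ)⁻¹) / β) atTop (𝓝 ((1 - 0) / β)) :=
    (tendsto_const_nhds.sub tendsto_inv_atTop_nhds_zero_nat).div_const β
  rw [log_div hγ0.ne' (sub_pos.2 hγ).ne', log_div hα.ne' (sub_pos.2 hα1).ne', show 1 / β * (log γ - log (1 - γ) - (log α - log (1 - α)))
      = (1 - 0) / β * (log γ - log α + (log (1 - α) - log (1 - γ))) by ring]
  refine (hpre.mul hblocks).congr' ?_
  filter_upwards [eventually_gt_atTop 0, eventually_le_self_of_tendsto_div hγ hb] with n hn hbn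
  have hn0 : (n : ℝ) ≠ 0 := by positivity
  rw [show (1 - (n : ℝ)⁻¹) / β = (n - 1) / β / n by field_simp, mul_comm_div,
    ← sum_Ico_inv_mul_sub (Nat.ceil_pos.2 (by positivity)) hbn, mul_sum]
  exact sum_congr rfl fun i _ ↦ by field_simp

/-- With λ_i = β·i·(n−i)/(n−1), the sum ∑_{i=⌈αn⌉}^{⌈γn⌉−1} 1/λ_i converges, as
    n → ∞, to (1/β)·[log(γ/(1−γ)) − log(α/(1−α))]. -/
theorem stmt_13 (β α γ : ℝ) (hβ : 0 < β) (hα : 0 < α) (hαγ : α ≤ γ) (hγ : γ < 1) :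
    Filter.Tendsto
      (fun n : ℕ => ∑ i ∈ Finset.Ico ⌈α * n⌉₊ ⌈γ * n⌉₊,
        ((n : ℝ) - 1) / (β * i * ((n : ℝ) - i)))
      Filter.atTop
      (nhds ((1 / β) * (Real.log (γ / (1 - γ)) - Real.log (α / (1 - α))))) :=
  stmt_13_general β α γ hα hαγ hγ
end
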